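/- Under these assumptions, the short exact sequence 0 → X → Y → Z → 0 of Z[G]-modules (where Y → Z is the augmentation map and Z has trivial G-action) induces a short exact sequence 0 → H_1(G, X) → H_1(G, Y) → H_1(G, Z) → 0 of group homology: the map H_1(G, X) → H_1(G, Y) is injective and the map H_1(G, Y) → H_1(G, Z) is surjective. -/

import Mathlib

set_option linter.unusedSectionVars false
set_option synthInstance.maxHeartbeats 1000000
set_option maxHeartbeats 1000000

/-!
STATEMENT 5: Let `L/K` be a Galois extension of number fields with group `G`, `S` a finite
set of places of `K` containing the archimedean and ramified places, with a fixed choice of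
a place `p(L)` of `L` above each `p ∈ S`, such that some finite `p0 ∈ S` has decomposition
group all of `G`.  Then the short exact sequence `0 → X → Y → ℤ → 0` (with `Y → ℤ` the
augmentation and `G` acting trivially on `ℤ`) induces a short exact sequence
`0 → H₁(G, X) → H₁(G, Y) → H₁(G, ℤ) → 0`: the induced map `H₁(G, X) → H₁(G, Y)` is
injective, the sequence is exact at `H₁(G, Y)`, and the induced map `H₁(G, Y) → H₁(G, ℤ)`
is surjective.

Here `Y` is the free abelian group on the set `S_L` of places of `L` above `S`, `X` is the
kernel of the augmentation map `Y → ℤ`, and `H₁` is group homology computed from the bar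
resolution, with functoriality given by `BarH1.H1map`.
-/

/-! Bar-resolution description of group homology `H₁(G, A)` (Tate cohomology `H⁻²(G, A)`):
1-chains are elements of `G →₀ A` (the symbol `[σ] ⊗ a` being `single σ a`), the degree-1
differential is `[σ] ⊗ a ↦ σ • a - a`, and the degree-2 differential is
`[σ, τ] ⊗ a ↦ [σ] ⊗ τ • a - [στ] ⊗ a + [τ] ⊗ a`. -/

namespace BarH1

variable (G : Type) [Group G] (A : Type) [AddCommGroup A] [DistribMulAction G A]

/-- The boundary map `(G →₀ A) →+ A` of the bar resolution in degree 1: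
`[σ] ⊗ a ↦ σ • a - a`. -/
noncomputable def d1 : (G →₀ A) →+ A :=
  Finsupp.liftAddHom fun σ =>
    (DistribMulAction.toAddMonoidHom A σ : A →+ A) - AddMonoidHom.id A

/-- 1-cycles of the bar resolution. -/
noncomputable def cycles : AddSubgroup (G →₀ A) := (d1 G A).ker

/-- 1-boundaries: the image of the degree-2 bar differential
`[σ, τ] ⊗ a ↦ [σ] ⊗ τ • a - [στ] ⊗ a + [τ] ⊗ a`. -/
noncomputable def boundaries : AddSubgroup (G →₀ A) :=
  AddSubgroup.closure {x | ∃ (σ τ : G) (a : A),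
    x = Finsupp.single σ (τ • a) - Finsupp.single (σ * τ) a + Finsupp.single τ a}

/-- Group homology `H₁(G, A)` (the Tate cohomology group `H⁻²(G, A)`). -/
noncomputable def H1 :=
  cycles G A ⧸ (boundaries G A).addSubgroupOf (cycles G A)

noncomputable instance : AddCommGroup (H1 G A) :=
  QuotientAddGroup.Quotient.addCommGroup _

open scoped Classical in
/-- The homology class of a 1-cycle (junk value `0` if the argument is not a cycle). -/
noncomputable def H1mk (f : G →₀ A) : H1 G A :=
  if hf : f ∈ cycles G A then QuotientAddGroup.mk ⟨f, hf⟩ else 0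

end BarH1

namespace BarH1

variable (G : Type) [Group G]
variable {A B : Type} [AddCommGroup A] [DistribMulAction G A]
  [AddCommGroup B] [DistribMulAction G B]

lemma d1_single (σ : G) (a : A) :
    d1 G A (Finsupp.single σ a) = σ • a - a := by
  simp [d1]

/-- The map on 1-chains induced by a homomorphism of coefficients. -/
noncomputable def chainsMap (f : A →+ B) : (G →₀ A) →+ (G →₀ B) :=
  Finsupp.mapRange.addMonoidHom f

lemma chainsMap_single (f : A →+ B) (σ : G) (a : A) :
    chainsMap G f (Finsupp.single σ a) = Finsupp.single σ (f a) :=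
  Finsupp.mapRange_single (hf := map_zero f)

lemma d1_chainsMap (f : A →+ B) (hf : ∀ (σ : G) (a : A), f (σ • a) = σ • f a)
    (x : G →₀ A) : d1 G B (chainsMap G f x) = f (d1 G A x) := by
  induction x using Finsupp.induction_linear with
  | zero => simp
  | add a b ha hb => simp only [map_add, ha, hb]
  | single σ a => rw [chainsMap_single, d1_single, d1_single, map_sub, hf]

lemma chainsMap_mem_cycles (f : A →+ B) (hf : ∀ (σ : G) (a : A), f (σ • a) = σ • f a)
    {x : G →₀ A} (hx : x ∈ cycles G A) : chainsMap G f x ∈ cycles G B := by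
  rw [cycles, AddMonoidHom.mem_ker] at hx ⊢
  rw [d1_chainsMap G f hf, hx, map_zero]

lemma chainsMap_mem_boundaries (f : A →+ B) (hf : ∀ (σ : G) (a : A), f (σ • a) = σ • f a)
    {x : G →₀ A} (hx : x ∈ boundaries G A) : chainsMap G f x ∈ boundaries G B := by
  have hle : boundaries G A ≤ (boundaries G B).comap (chainsMap G f) := by
    rw [boundaries, AddSubgroup.closure_le]
    rintro y ⟨σ, τ, a, rfl⟩
    rw [SetLike.mem_coe, AddSubgroup.mem_comap, map_add, map_sub,
      chainsMap_single, chainsMap_single, chainsMap_single, hf]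
    exact AddSubgroup.subset_closure ⟨σ, τ, f a, rfl⟩
  exact hle hx

/-- The map on 1-cycles induced by a `G`-equivariant homomorphism of coefficients. -/
noncomputable def cyclesMap (f : A →+ B) (hf : ∀ (σ : G) (a : A), f (σ • a) = σ • f a) :
    ↥(cycles G A) →+ ↥(cycles G B) :=
  AddMonoidHom.codRestrict ((chainsMap G f).comp (cycles G A).subtype) (cycles G B)
    (fun x => chainsMap_mem_cycles G f hf x.2)

/-- Functoriality of `H₁(G, −)`: the map induced by a `G`-equivariant homomorphism of
coefficients. -/
noncomputable def H1map (f : A →+ B) (hf : ∀ (σ : G) (a : A), f (σ • a) = σ • f a) :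
    H1 G A →+ H1 G B :=
  QuotientAddGroup.map _ _ (cyclesMap G f hf)
    (fun x hx => by
      rw [AddSubgroup.mem_addSubgroupOf] at hx
      rw [AddSubgroup.mem_comap, AddSubgroup.mem_addSubgroupOf]
      exact chainsMap_mem_boundaries G f hf hx)

end BarH1

namespace TateNF

open NumberField IsDedekindDomain

variable (K L : Type) [Field K] [Field L] [NumberField K] [NumberField L]
  [Algebra K L] [IsGalois K L] [FiniteDimensional K L]

/-- The ring homomorphism `𝓞 L → 𝓞 L` obtained by restricting `σ : L ≃ₐ[K] L` to the
ring of integers. -/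
noncomputable def galRes (σ : L ≃ₐ[K] L) : (𝓞 L) →+* (𝓞 L) :=
  ((galRestrict (𝓞 K) K L (𝓞 L) σ).toAlgHom : (𝓞 L) →+* (𝓞 L))

lemma galRes_apply (σ : L ≃ₐ[K] L) (x : 𝓞 L) :
    galRes K L σ x = galRestrict (𝓞 K) K L (𝓞 L) σ x := rfl

lemma galRes_comp (σ τ : L ≃ₐ[K] L) :
    (galRes K L σ).comp (galRes K L τ) = galRes K L (σ * τ) := by
  ext x
  simp [galRes_apply, map_mul, AlgEquiv.mul_apply]

lemma galRes_one : galRes K L 1 = RingHom.id (𝓞 L) := by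
  ext x
  simp [galRes_apply, map_one]

/-- The natural action of the Galois group on the finite places of `L`:
`σ` sends a prime `P` of `𝓞 L` to its image `σ(P)` (the preimage of `P` under `σ⁻¹`). -/
noncomputable instance : MulAction (L ≃ₐ[K] L) (HeightOneSpectrum (𝓞 L)) where
  smul σ v :=
    { asIdeal := Ideal.comap (galRes K L σ⁻¹) v.asIdeal
      isPrime := Ideal.comap_isPrime _ _
      ne_bot := fun h => v.ne_bot <| by
        have hsurj : Function.Surjective (galRes K L σ⁻¹) :=
          (galRestrict (𝓞 K) K L (𝓞 L) σ⁻¹).surjective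
        rw [← Ideal.map_comap_of_surjective _ hsurj v.asIdeal, h, Ideal.map_bot] }
  one_smul v := by
    ext x
    show x ∈ Ideal.comap (galRes K L 1⁻¹) v.asIdeal ↔ _
    rw [inv_one, galRes_one]
    simp
  mul_smul σ τ v := by
    ext x
    show x ∈ Ideal.comap (galRes K L (σ * τ)⁻¹) v.asIdeal ↔
      x ∈ Ideal.comap (galRes K L σ⁻¹) (Ideal.comap (galRes K L τ⁻¹) v.asIdeal)
    rw [Ideal.comap_comap, galRes_comp, mul_inv_rev]

lemma smul_asIdeal (σ : L ≃ₐ[K] L) (v : HeightOneSpectrum (𝓞 L)) :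
    (σ • v).asIdeal = Ideal.comap (galRes K L σ⁻¹) v.asIdeal := rfl

/-- The Galois action on finite places of `L` commutes with restriction to `K`. -/
lemma comap_algebraMap_smul (σ : L ≃ₐ[K] L) (v : HeightOneSpectrum (𝓞 L)) :
    ((σ • v).asIdeal).comap (algebraMap (𝓞 K) (𝓞 L)) =
      v.asIdeal.comap (algebraMap (𝓞 K) (𝓞 L)) := by
  rw [smul_asIdeal, Ideal.comap_comap]
  congr 1
  ext x
  simp [galRes_apply]

/-- A place of a number field `F`: either an infinite place or a finite place
(a nonzero prime of the ring of integers). -/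
abbrev PlaceOf (F : Type) [Field F] [NumberField F] : Type :=
  NumberField.InfinitePlace F ⊕ HeightOneSpectrum (𝓞 F)

/-- `LiesAbove P p` means that the place `P` of `L` lies above the place `p` of `K`. -/
def LiesAbove : PlaceOf L → PlaceOf K → Prop
  | .inl w, .inl u => w.comap (algebraMap K L) = u
  | .inr P, .inr p => P.asIdeal.comap (algebraMap (𝓞 K) (𝓞 L)) = p.asIdeal
  | _, _ => False

/-- The natural action of the Galois group on the places of `L`. -/
noncomputable instance : MulAction (L ≃ₐ[K] L) (PlaceOf L) where
  smul σ := Sum.map (fun w => σ • w) (fun v => σ • v)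
  one_smul := by
    rintro (w | v)
    · show Sum.inl ((1 : L ≃ₐ[K] L) • w) = Sum.inl w
      rw [one_smul]
    · show Sum.inr ((1 : L ≃ₐ[K] L) • v) = Sum.inr v
      rw [one_smul]
  mul_smul σ τ := by
    rintro (w | v)
    · show Sum.inl ((σ * τ) • w) = Sum.inl (σ • τ • w)
      rw [mul_smul]
    · show Sum.inr ((σ * τ) • v) = Sum.inr (σ • τ • v)
      rw [mul_smul]

lemma smul_inl (σ : L ≃ₐ[K] L) (w : NumberField.InfinitePlace L) :
    σ • (Sum.inl w : PlaceOf L) = Sum.inl (σ • w) := rfl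

lemma smul_inr (σ : L ≃ₐ[K] L) (v : HeightOneSpectrum (𝓞 L)) :
    σ • (Sum.inr v : PlaceOf L) = Sum.inr (σ • v) := rfl

lemma liesAbove_smul (σ : L ≃ₐ[K] L) (P : PlaceOf L) (p : PlaceOf K)
    (h : LiesAbove K L P p) : LiesAbove K L (σ • P) p := by
  obtain w | v := P <;> obtain u | q := p
  · rw [smul_inl]
    show (σ • w).comap (algebraMap K L) = u
    rw [NumberField.InfinitePlace.comap_smul,
      show (RingHom.comp (↑σ.symm) (algebraMap K L)) = algebraMap K L from
        RingHom.ext fun x => σ.symm.commutes x]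
    exact h
  · exact (h : False).elim
  · exact (h : False).elim
  · rw [smul_inr]
    show ((σ • v).asIdeal).comap (algebraMap (𝓞 K) (𝓞 L)) = q.asIdeal
    rw [comap_algebraMap_smul]
    exact h

variable (S : Finset (PlaceOf K))

/-- The set `S_L` of places of `L` lying above the places in `S`. -/
def SL : Set (PlaceOf L) := {P | ∃ p ∈ S, LiesAbove K L P p}

/-- The Galois action on `S_L`. -/
noncomputable instance : MulAction (L ≃ₐ[K] L) ↥(SL K L S) where
  smul σ P := ⟨σ • (P : PlaceOf L), by
    obtain ⟨p, hp, h⟩ := P.2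
    exact ⟨p, hp, liesAbove_smul K L σ _ _ h⟩⟩
  one_smul P := Subtype.ext (one_smul _ (P : PlaceOf L))
  mul_smul σ τ P := Subtype.ext (mul_smul σ τ (P : PlaceOf L))

/-- The decomposition group of a place `P ∈ S_L`: the stabilizer of `P` under the Galois
action on the places of `L`. -/
noncomputable def DecompGrp (P : ↥(SL K L S)) : Subgroup (L ≃ₐ[K] L) :=
  MulAction.stabilizer (L ≃ₐ[K] L) (P : PlaceOf L)

attribute [local instance] Finsupp.comapSMul Finsupp.comapMulAction Finsupp.comapDistribMulAction

/-- `Y`: the free abelian group on `S_L`, with the Galois group permuting the basis. -/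
abbrev Y : Type := ↥(SL K L S) →₀ ℤ

/-- The augmentation map `Y → ℤ`, sending every place in `S_L` to `1`. -/
noncomputable def augY : Y K L S →+ ℤ :=
  Finsupp.liftAddHom fun _ => AddMonoidHom.id ℤ

lemma augY_smul (σ : L ≃ₐ[K] L) (f : Y K L S) : augY K L S (σ • f) = augY K L S f := by
  show augY K L S (Finsupp.mapDomain (fun P => σ • P) f) = _
  simp only [augY, Finsupp.liftAddHom_apply]
  exact Finsupp.sum_mapDomain_index (fun _ => rfl) (fun _ _ _ => rfl)

/-- `X`: the kernel of the augmentation map `Y → ℤ`, as a subgroup of `Y`. -/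
noncomputable def Xsub : AddSubgroup (Y K L S) := (augY K L S).ker

lemma mem_Xsub (f : Y K L S) : f ∈ Xsub K L S ↔ augY K L S f = 0 := Iff.rfl

/-- The Galois action on `X`. -/
noncomputable instance : DistribMulAction (L ≃ₐ[K] L) ↥(Xsub K L S) where
  smul σ x := ⟨σ • (x : Y K L S), by
    rw [mem_Xsub, augY_smul]
    exact (mem_Xsub K L S _).mp x.2⟩
  one_smul x := Subtype.ext (one_smul _ (x : Y K L S))
  mul_smul σ τ x := Subtype.ext (mul_smul σ τ (x : Y K L S))
  smul_zero σ := Subtype.ext (smul_zero (A := Y K L S) σ)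
  smul_add σ x y := Subtype.ext (smul_add σ (x : Y K L S) (y : Y K L S))

/-- The element `P - P'` of `X`, for places `P, P' ∈ S_L`. -/
noncomputable def Xgen (P P' : ↥(SL K L S)) : ↥(Xsub K L S) :=
  ⟨Finsupp.single P 1 - Finsupp.single P' 1, by
    rw [mem_Xsub, map_sub]
    simp [augY]⟩

end TateNF

/-- The trivial Galois action on `ℤ`. -/
noncomputable instance (K L : Type) [Field K] [Field L] [Algebra K L] :
    DistribMulAction (L ≃ₐ[K] L) ℤ where
  smul _ n := n
  one_smul _ := rfl
  mul_smul _ _ _ := rfl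
  smul_zero _ := rfl
  smul_add _ _ _ := rfl

attribute [local instance] Finsupp.comapSMul Finsupp.comapMulAction Finsupp.comapDistribMulAction

/-!
Since `G` fixes the place `P₀` above `p0`, the map `n ↦ n • P₀` is a `G`-equivariant section of
the augmentation, so `0 → X → Y → ℤ → 0` is split as a sequence of `G`-modules. `H₁(G, -)` is
additive, so it carries the splitting identities `r ∘ i = 1`, `p ∘ s = 1`, `i ∘ r + s ∘ p = 1` to
homology, and any sequence of abelian groups with such a splitting is short exact.
-/

namespace AddMonoidHom

variable {A B C : Type} [AddCommGroup A] [AddCommGroup B] [AddCommGroup C]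

theorem exact_of_retraction_of_section (i : A →+ B) (p : B →+ C) (r : B →+ A)
    (s : C →+ B) (hri : ∀ a, r (i a) = a) (hps : ∀ c, p (s c) = c)
    (hsplit : ∀ b, i (r b) + s (p b) = b) : Function.Exact i p := by
  intro b
  refine ⟨fun hb => ⟨r b, by simpa [hb] using hsplit b⟩, ?_⟩
  rintro ⟨a, rfl⟩
  have hspi : s (p (i a)) = 0 := by simpa [hri] using hsplit (i a)
  rw [← hps (p (i a)), hspi, map_zero]

variable {i : A →+ B} {p : B →+ C} (hinj : Function.Injective i) (hip : Function.Exact i p)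
  {s : C →+ B} (hps : ∀ c, p (s c) = c)

noncomputable def retractionOfSection : B →+ A :=
  ((ofInjective hinj).symm : i.range →+ A).comp
    ((AddMonoidHom.id B - s.comp p).codRestrict i.range fun b => (hip _).1 (by simp [hps]))

lemma apply_retractionOfSection (b : B) :
    i (retractionOfSection hinj hip hps b) = b - s (p b) :=
  congrArg Subtype.val ((ofInjective hinj).apply_symm_apply _)

lemma retractionOfSection_apply (a : A) : retractionOfSection hinj hip hps (i a) = a := by
  apply hinj
  rw [apply_retractionOfSection, (hip (i a)).2 ⟨a, rfl⟩, map_zero, sub_zero]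

lemma apply_retractionOfSection_add_apply_section (b : B) :
    i (retractionOfSection hinj hip hps b) + s (p b) = b := by
  rw [apply_retractionOfSection, sub_add_cancel]

lemma retractionOfSection_smul {G : Type} [Group G] [DistribMulAction G A] [DistribMulAction G B]
    [DistribMulAction G C] (hi : ∀ (σ : G) (a : A), i (σ • a) = σ • i a)
    (hp : ∀ (σ : G) (b : B), p (σ • b) = σ • p b) (hs : ∀ (σ : G) (c : C), s (σ • c) = σ • s c)
    (σ : G) (b : B) :
    retractionOfSection hinj hip hps (σ • b) = σ • retractionOfSection hinj hip hps b := by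
  apply hinj
  rw [hi, apply_retractionOfSection, apply_retractionOfSection, hp, hs, smul_sub]

end AddMonoidHom

namespace BarH1

variable {G : Type} [Group G] {A B C : Type} [AddCommGroup A] [DistribMulAction G A]
  [AddCommGroup B] [DistribMulAction G B] [AddCommGroup C] [DistribMulAction G C]

lemma H1_hom_ext {M : Type} [AddCommGroup M] {φ ψ : H1 G A →+ M}
    (h : ∀ x : cycles G A, φ (QuotientAddGroup.mk x) = ψ (QuotientAddGroup.mk x)) : φ = ψ :=
  QuotientAddGroup.addMonoidHom_ext _ (AddMonoidHom.ext h)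

lemma H1map_id : H1map G (AddMonoidHom.id A) (fun _ _ => rfl) = AddMonoidHom.id (H1 G A) :=
  H1_hom_ext fun _ => congrArg QuotientAddGroup.mk (Subtype.ext (Finsupp.ext fun _ => rfl))

lemma H1map_eq_id {f : A →+ A} (hf : ∀ (σ : G) (a : A), f (σ • a) = σ • f a)
    (h : ∀ a, f a = a) : H1map G f hf = AddMonoidHom.id (H1 G A) := by
  obtain rfl : f = AddMonoidHom.id A := AddMonoidHom.ext h
  exact H1map_id

lemma H1map_comp (f : A →+ B) (g : B →+ C) (hf : ∀ (σ : G) (a : A), f (σ • a) = σ • f a)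
    (hg : ∀ (σ : G) (b : B), g (σ • b) = σ • g b) :
    H1map G (g.comp f) (fun σ a => (congrArg g (hf σ a)).trans (hg σ (f a))) =
      (H1map G g hg).comp (H1map G f hf) :=
  H1_hom_ext fun _ => congrArg QuotientAddGroup.mk (Subtype.ext (Finsupp.ext fun _ => rfl))

lemma H1map_add (f g : A →+ B) (hf : ∀ (σ : G) (a : A), f (σ • a) = σ • f a)
    (hg : ∀ (σ : G) (a : A), g (σ • a) = σ • g a) :
    H1map G (f + g) (fun σ a => by simp only [AddMonoidHom.add_apply, hf, hg, smul_add]) =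
      H1map G f hf + H1map G g hg :=
  H1_hom_ext fun _ => congrArg QuotientAddGroup.mk (Subtype.ext (Finsupp.ext fun _ => rfl))

open AddMonoidHom in
theorem H1map_shortExact_of_section (i : A →+ B) (p : B →+ C) (s : C →+ B)
    (hi : ∀ (σ : G) (a : A), i (σ • a) = σ • i a) (hp : ∀ (σ : G) (b : B), p (σ • b) = σ • p b)
    (hs : ∀ (σ : G) (c : C), s (σ • c) = σ • s c)
    (hinj : Function.Injective i) (hip : Function.Exact i p) (hps : ∀ c, p (s c) = c) :
    Function.Injective (H1map G i hi) ∧ Function.Exact (H1map G i hi) (H1map G p hp) ∧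
      Function.Surjective (H1map G p hp) := by
  set r := retractionOfSection hinj hip hps
  have hr := retractionOfSection_smul hinj hip hps hi hp hs
  have hri : Function.LeftInverse (H1map G r hr) (H1map G i hi) := fun c => by
    rw [← comp_apply, ← H1map_comp, H1map_eq_id _ (retractionOfSection_apply hinj hip hps),
      id_apply]
  have hps' : Function.RightInverse (H1map G s hs) (H1map G p hp) := fun c => by
    rw [← comp_apply, ← H1map_comp, H1map_eq_id _ hps, id_apply]
  have hsplit : ∀ c, H1map G i hi (H1map G r hr c) + H1map G s hs (H1map G p hp c) = c :=
    fun c => by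
      rw [← comp_apply, ← comp_apply, ← H1map_comp, ← H1map_comp, ← AddMonoidHom.add_apply,
        ← H1map_add, H1map_eq_id _ (apply_retractionOfSection_add_apply_section hinj hip hps),
        id_apply]
  exact ⟨hri.injective, exact_of_retraction_of_section _ _ _ _ hri hps' hsplit,
    hps'.surjective⟩

end BarH1

namespace TateNF

variable (K L : Type) [Field K] [Field L] [NumberField K] [NumberField L]
  [Algebra K L] [IsGalois K L] [FiniteDimensional K L] (S : Finset (PlaceOf K))

lemma augY_single (P : SL K L S) (n : ℤ) : augY K L S (Finsupp.single P n) = n := by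
  simp [augY]

lemma exact_subtype_augY : Function.Exact (Xsub K L S).subtype (augY K L S) := fun y =>
  ⟨fun hy => ⟨⟨y, hy⟩, rfl⟩, by rintro ⟨x, rfl⟩; exact x.2⟩

end TateNF

open TateNF in
theorem homology_seq_X_Y_Z_exact_general
    (K L : Type) [Field K] [Field L] [NumberField K] [NumberField L]
    [Algebra K L] [IsGalois K L] [FiniteDimensional K L]
    (S : Finset (TateNF.PlaceOf K))
    -- for each `p ∈ S`, a fixed choice of a place `p(L)` of `L` above `p`
    (PL : ∀ p ∈ S, ↥(TateNF.SL K L S))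
    -- a finite place `p0 ∈ S` whose decomposition group is all of `G`
    (p0 : TateNF.PlaceOf K) (hp0S : p0 ∈ S)
    (hp0full : TateNF.DecompGrp K L S (PL p0 hp0S) = ⊤)
    :
    Function.Injective
      (BarH1.H1map (L ≃ₐ[K] L)
        ((Xsub K L S).subtype : ↥(Xsub K L S) →+ Y K L S) (fun _ _ => rfl)) ∧
    Function.Exact
      (BarH1.H1map (L ≃ₐ[K] L)
        ((Xsub K L S).subtype : ↥(Xsub K L S) →+ Y K L S) (fun _ _ => rfl))
      (BarH1.H1map (L ≃ₐ[K] L) (augY K L S) (fun σ f => augY_smul K L S σ f)) ∧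
    Function.Surjective
      (BarH1.H1map (L ≃ₐ[K] L) (augY K L S) (fun σ f => augY_smul K L S σ f)) := by
  set P0 := PL p0 hp0S
  have hfix : ∀ σ : L ≃ₐ[K] L, σ • P0 = P0 := fun σ =>
    Subtype.ext (MulAction.mem_stabilizer_iff.mp (hp0full.ge (Subgroup.mem_top σ)))
  refine BarH1.H1map_shortExact_of_section _ _ (Finsupp.singleAddHom P0) _ _ (fun σ n => ?_)
    Subtype.val_injective (exact_subtype_augY K L S) (augY_single K L S P0)
  change Finsupp.single P0 n = σ • Finsupp.single P0 n
  rw [Finsupp.comapSMul_single, hfix]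

open TateNF in
theorem homology_seq_X_Y_Z_exact
    (K L : Type) [Field K] [Field L] [NumberField K] [NumberField L]
    [Algebra K L] [IsGalois K L] [FiniteDimensional K L]
    (S : Finset (TateNF.PlaceOf K))
    -- `S` contains all the infinite places of `K`
    (hSinf : ∀ w : NumberField.InfinitePlace K, Sum.inl w ∈ S)
    -- `S` contains all the finite places of `K` that ramify in `L/K`
    (hSram : ∀ (p : IsDedekindDomain.HeightOneSpectrum (NumberField.RingOfIntegers K))
      (P : IsDedekindDomain.HeightOneSpectrum (NumberField.RingOfIntegers L)),
      P.asIdeal.comap (algebraMap (NumberField.RingOfIntegers K) (NumberField.RingOfIntegers L))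
          = p.asIdeal →
      1 < Ideal.ramificationIdx'
          p.asIdeal P.asIdeal →
      Sum.inr p ∈ S)
    -- for each `p ∈ S`, a fixed choice of a place `p(L)` of `L` above `p`
    (PL : ∀ p ∈ S, ↥(TateNF.SL K L S))
    (hPL : ∀ (p : TateNF.PlaceOf K) (hp : p ∈ S), TateNF.LiesAbove K L (PL p hp : TateNF.PlaceOf L) p)
    -- a finite place `p0 ∈ S` whose decomposition group is all of `G`
    (p0 : TateNF.PlaceOf K) (hp0S : p0 ∈ S)
    (hp0fin : ∃ v : IsDedekindDomain.HeightOneSpectrum (NumberField.RingOfIntegers K),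
      p0 = Sum.inr v)
    (hp0full : TateNF.DecompGrp K L S (PL p0 hp0S) = ⊤)
    :
    Function.Injective
      (BarH1.H1map (L ≃ₐ[K] L)
        ((Xsub K L S).subtype : ↥(Xsub K L S) →+ Y K L S) (fun _ _ => rfl)) ∧
    Function.Exact
      (BarH1.H1map (L ≃ₐ[K] L)
        ((Xsub K L S).subtype : ↥(Xsub K L S) →+ Y K L S) (fun _ _ => rfl))
      (BarH1.H1map (L ≃ₐ[K] L) (augY K L S) (fun σ f => augY_smul K L S σ f)) ∧
    Function.Surjective
      (BarH1.H1map (L ≃ₐ[K] L) (augY K L S) (fun σ f => augY_smul K L S σ f)) :=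
  homology_seq_X_Y_Z_exact_general K L S PL p0 hp0S hp0full
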